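/- (Theorem 2, linear scaling corresponds to Kolmogorov entropy) Let (X, μ) be a nonatomic standard Borel probability space and T : X → X an invertible ergodic measure-preserving transformation whose Kolmogorov entropy h(T) = sup_f lim_n H(ξ_T^n)/n satisfies 0 < h(T) < ∞. Then the sequence c_n = n is a scaling sequence for T. -/

import Mathlib

open MeasureTheory Filter Set
open scoped ENNReal

/-- Shannon entropy of a finite measurable partition, encoded as a map `f : X → F`
into a finite set, with respect to the measure `μ` (convention `0 log 0 = 0`). -/
noncomputable def shannonEntropy {X : Type*} [MeasurableSpace X] (μ : Measure X)
    {F : Type*} [Fintype F] (f : X → F) : ℝ :=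
  -∑ a : F, (μ (f ⁻¹' {a})).toReal * Real.log (μ (f ⁻¹' {a})).toReal

/-- `H(ξ_T^n)`: the Shannon entropy of the joint partition
`x ↦ (f x, f (T x), …, f (T^[n-1] x))`. -/
noncomputable def jointH {X : Type*} [MeasurableSpace X] (μ : Measure X)
    (T : X → X) {F : Type*} [Fintype F] (f : X → F) (n : ℕ) : ℝ :=
  shannonEntropy μ (fun x => (fun i : Fin n => f (T^[(i : ℕ)] x)))

/-- The `ε`-entropy `H_ε(f)`: the infimum, over measurable sets `A` with
`μ A > 1 − ε`, of the Shannon entropy of `f` with respect to the normalized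
restriction of `μ` to `A`. -/
noncomputable def epsEntropy {X : Type*} [MeasurableSpace X] (μ : Measure X)
    {F : Type*} [Fintype F] (f : X → F) (ε : ℝ) : ℝ :=
  sInf {x : ℝ | ∃ A : Set X, MeasurableSet A ∧ ENNReal.ofReal (1 - ε) < μ A ∧
    x = shannonEntropy ((μ A)⁻¹ • μ.restrict A) f}

/-- The joint partition map `ξ_T^n : x ↦ (f x, f (T x), …, f (T^[n-1] x))`. -/
def jointMap {X F : Type*} (T : X → X) (f : X → F) (n : ℕ) : X → (Fin n → F) :=
  fun x => (fun i : Fin n => f (T^[(i : ℕ)] x))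

/-- `(c_n)` is a scaling sequence for `T`: the `c_n` are positive (for `n ≥ 1`);
for every finite partition `f`, `lim_{ε→0} limsup_n H_ε(ξ_T^n)/c_n < ∞`; and there
is a finite partition `f` with `lim_{ε→0} liminf_n H_ε(ξ_T^n)/c_n > 0`. Since
`H_ε` is nonincreasing in `ε`, the limits as `ε → 0⁺` are the suprema over
`ε ∈ (0,1)`; all quantities are computed in `[0,∞]`. -/
def IsScalingSeq {X : Type*} [MeasurableSpace X] (μ : Measure X) (T : X → X)
    (c : ℕ → ℝ) : Prop :=
  (∀ n : ℕ, 1 ≤ n → 0 < c n) ∧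
  (∀ (k : ℕ) (f : X → Fin k), Measurable f →
    (⨆ ε ∈ Set.Ioo (0 : ℝ) 1,
      Filter.limsup
        (fun n : ℕ => ENNReal.ofReal (epsEntropy μ (jointMap T f n) ε / c n))
        Filter.atTop) < ⊤) ∧
  (∃ (k : ℕ) (f : X → Fin k), Measurable f ∧
    0 < ⨆ ε ∈ Set.Ioo (0 : ℝ) 1,
      Filter.liminf
        (fun n : ℕ => ENNReal.ofReal (epsEntropy μ (jointMap T f n) ε / c n))
        Filter.atTop)

/-- `h(T,f) = lim_n H(ξ_T^n)/n`; by subadditivity this limit exists and equals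
`inf_{n ≥ 1} H(ξ_T^n)/n`, which we take as the definition. -/
noncomputable def procEntropy {X : Type*} [MeasurableSpace X] (μ : Measure X)
    (T : X → X) {F : Type*} [Fintype F] (f : X → F) : ℝ :=
  sInf {x : ℝ | ∃ n : ℕ, 1 ≤ n ∧ x = jointH μ T f n / (n : ℝ)}

/-- Kolmogorov entropy `h(T) = sup_f h(T,f)`, the supremum over all measurable maps
from `X` into finite sets (equivalently, into the sets `Fin k`), valued in `[0,∞]`. -/
noncomputable def kolEntropy {X : Type*} [MeasurableSpace X] (μ : Measure X)
    (T : X → X) : ℝ≥0∞ :=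
  ⨆ (k : ℕ) (f : X → Fin k) (_ : Measurable f), ENNReal.ofReal (procEntropy μ T f)

/-!
Discarding a set of measure less than `ε` lowers the entropy of a partition into `m` pieces by at
most `log 2 + ε log m`, and never brings it above `log m`. The partition `ξ_T^n` of a `k`-piece
partition `f` has at most `k ^ n` pieces and entropy at least `n h(T,f)`, since `h(T,f)` is the
infimum of `H(ξ_T^n)/n`. Hence `h(T,f) - ε log k - (log 2)/n ≤ H_ε(ξ_T^n)/n ≤ log k`, and
`h(T) > 0` provides an `f` with `h(T,f) > 0`.
-/

open Real ProbabilityTheory Topology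

namespace Real

lemma negMulLog_add_le {s t : ℝ} (hs : 0 ≤ s) (ht : 0 ≤ t) :
    negMulLog (s + t) ≤ negMulLog s + negMulLog t := by
  have mul_log_le : ∀ {u v : ℝ}, 0 ≤ u → 0 ≤ v → u * log u ≤ u * log (u + v) := by
    intro u v hu hv
    rcases hu.eq_or_lt with rfl | hu
    · simp
    exact mul_le_mul_of_nonneg_left (log_le_log hu (by linarith)) hu.le
  have hs' := mul_log_le hs ht
  have ht' := mul_log_le ht hs
  rw [add_comm t s] at ht'
  simp only [negMulLog, neg_mul, add_mul]
  linarith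

lemma sum_negMulLog_le {G : Type*} [Fintype G] {t : G → ℝ} (ht : ∀ a, 0 ≤ t a) :
    ∑ a, negMulLog (t a) ≤ negMulLog (∑ a, t a) + (∑ a, t a) * log (Fintype.card G) := by
  rcases isEmpty_or_nonempty G with _ | _
  · simp
  set m : ℝ := (Fintype.card G : ℝ)
  have hm : 0 < m := by positivity
  have jensen := concaveOn_negMulLog.le_map_sum (t := Finset.univ) (w := fun _ => m⁻¹)
    (p := t) (fun _ _ => by positivity) (by simp [m]) (fun a _ => ht a)
  have negMulLog_inv : negMulLog m⁻¹ = m⁻¹ * log m := by simp [negMulLog, log_inv]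
  simp only [smul_eq_mul, ← Finset.mul_sum, negMulLog_mul, negMulLog_inv] at jensen
  refine le_of_mul_le_mul_left ?_ (inv_pos.2 hm)
  linarith

lemma sum_negMulLog_eq_of_sum_eq {G : Type*} [Fintype G] {t : G → ℝ} {p : ℝ} (hp : p ≠ 0)
    (ht : ∑ a, t a = p) :
    ∑ a, negMulLog (t a) = negMulLog p + p * ∑ a, negMulLog (p⁻¹ * t a) := by
  have split (a : G) : negMulLog (t a) = p⁻¹ * t a * negMulLog p + p * negMulLog (p⁻¹ * t a) := by
    rw [← negMulLog_mul, mul_inv_cancel_left₀ hp]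
  rw [Finset.sum_congr rfl fun a _ => split a, Finset.sum_add_distrib, ← Finset.sum_mul,
    ← Finset.mul_sum, ← Finset.mul_sum, ht, inv_mul_cancel₀ hp, one_mul]

end Real

section ShannonEntropy

variable {X : Type*} [MeasurableSpace X] {G : Type*} [Fintype G]

lemma shannonEntropy_eq_sum_negMulLog (μ : Measure X) (g : X → G) :
    shannonEntropy μ g = ∑ a, negMulLog (μ.real (g ⁻¹' {a})) := by
  simp [shannonEntropy, negMulLog, measureReal_def]

lemma shannonEntropy_nonneg (μ : Measure X) [IsProbabilityMeasure μ] (g : X → G) :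
    0 ≤ shannonEntropy μ g := by
  rw [shannonEntropy_eq_sum_negMulLog]
  exact Finset.sum_nonneg fun a _ => negMulLog_nonneg measureReal_nonneg measureReal_le_one

lemma sum_measureReal_preimage_singleton_inter (μ : Measure X) [IsFiniteMeasure μ] {g : X → G}
    (hg : ∀ a, MeasurableSet (g ⁻¹' {a})) (B : Set X) :
    ∑ a, μ.real (g ⁻¹' {a} ∩ B) = μ.real B := by
  simpa [measureReal_restrict_apply (hg _)] using
    sum_measureReal_preimage_singleton (μ := μ.restrict B) Finset.univ (fun a _ => hg a)

lemma shannonEntropy_le_log_card (μ : Measure X) [IsProbabilityMeasure μ] {g : X → G}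
    (hg : ∀ a, MeasurableSet (g ⁻¹' {a})) :
    shannonEntropy μ g ≤ log (Fintype.card G) := by
  have hsum : ∑ a, μ.real (g ⁻¹' {a}) = 1 := by
    simpa using sum_measureReal_preimage_singleton_inter μ hg univ
  have h := sum_negMulLog_le fun a => measureReal_nonneg (μ := μ) (s := g ⁻¹' {a})
  rwa [hsum, negMulLog_one, one_mul, zero_add, ← shannonEntropy_eq_sum_negMulLog] at h

/-- Split each fibre of `g` along `A` and `Aᶜ`: the `A`-parts carry the conditional entropy,
the `Aᶜ`-parts at most `μ Aᶜ · log |G|`, and the choice between `A` and `Aᶜ` costs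
`binEntropy (μ A)`. -/
lemma shannonEntropy_le_binEntropy_add (μ : Measure X) [IsProbabilityMeasure μ] {g : X → G}
    (hg : ∀ a, MeasurableSet (g ⁻¹' {a})) {A : Set X} (hA : MeasurableSet A) (hA0 : μ A ≠ 0) :
    shannonEntropy μ g ≤
      binEntropy (μ.real A) + shannonEntropy μ[|A] g + μ.real Aᶜ * log (Fintype.card G) := by
  have := cond_isProbabilityMeasure (μ := μ) hA0
  set p := μ.real A
  have hp : p ≠ 0 := (ENNReal.toReal_pos hA0 (measure_ne_top μ A)).ne'
  set s : G → ℝ := fun a => μ.real (g ⁻¹' {a} ∩ A)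
  set t : G → ℝ := fun a => μ.real (g ⁻¹' {a} ∩ Aᶜ)
  have fibre_split (a : G) : μ.real (g ⁻¹' {a}) = s a + t a := by
    rw [← measureReal_inter_add_sdiff hA, sdiff_eq]
  have cond_fibre (a : G) : μ[|A].real (g ⁻¹' {a}) = p⁻¹ * s a := by
    simp [measureReal_def, cond_apply hA, inter_comm, s, p, ENNReal.toReal_mul]
  have hs : ∑ a, negMulLog (s a) = negMulLog p + p * shannonEntropy μ[|A] g := by
    rw [sum_negMulLog_eq_of_sum_eq hp (sum_measureReal_preimage_singleton_inter μ hg A),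
      shannonEntropy_eq_sum_negMulLog]
    simp only [cond_fibre, s]
  have ht : ∑ a, negMulLog (t a) ≤ negMulLog (μ.real Aᶜ) + μ.real Aᶜ * log (Fintype.card G) := by
    simpa [t, sum_measureReal_preimage_singleton_inter μ hg Aᶜ] using
      sum_negMulLog_le fun a => measureReal_nonneg (μ := μ) (s := g ⁻¹' {a} ∩ Aᶜ)
  have subadd : shannonEntropy μ g ≤ ∑ a, negMulLog (s a) + ∑ a, negMulLog (t a) := by
    rw [shannonEntropy_eq_sum_negMulLog, ← Finset.sum_add_distrib]
    exact Finset.sum_le_sum fun a _ => fibre_split a ▸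
      negMulLog_add_le measureReal_nonneg measureReal_nonneg
  have hbin : binEntropy p = negMulLog p + negMulLog (μ.real Aᶜ) := by
    rw [binEntropy_eq_negMulLog_add_negMulLog_one_sub, probReal_compl_eq_one_sub hA]
  have hpH : p * shannonEntropy μ[|A] g ≤ shannonEntropy μ[|A] g :=
    mul_le_of_le_one_left (shannonEntropy_nonneg _ g) measureReal_le_one
  linarith

end ShannonEntropy

section EpsEntropy

variable {X : Type*} [MeasurableSpace X] (μ : Measure X) {G : Type*} [Fintype G] {ε : ℝ}

lemma epsEntropy_le_shannonEntropy_cond [IsFiniteMeasure μ] (g : X → G) {A : Set X}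
    (hA : MeasurableSet A) (hμA : ENNReal.ofReal (1 - ε) < μ A) :
    epsEntropy μ g ε ≤ shannonEntropy μ[|A] g := by
  refine csInf_le ⟨0, ?_⟩ ⟨A, hA, hμA, rfl⟩
  rintro _ ⟨B, -, hμB, rfl⟩
  have := cond_isProbabilityMeasure (μ := μ) (pos_of_gt hμB).ne'
  exact shannonEntropy_nonneg μ[|B] g

lemma epsEntropy_le_shannonEntropy [IsProbabilityMeasure μ] (g : X → G) (hε : 0 < ε) :
    epsEntropy μ g ε ≤ shannonEntropy μ g := by
  simpa using epsEntropy_le_shannonEntropy_cond μ g MeasurableSet.univ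
    (by simpa [ENNReal.ofReal_lt_one] using hε)

lemma shannonEntropy_sub_le_epsEntropy [IsProbabilityMeasure μ] {g : X → G}
    (hg : ∀ a, MeasurableSet (g ⁻¹' {a})) (hε : ε ∈ Ioo 0 1) :
    shannonEntropy μ g - log 2 - ε * log (Fintype.card G) ≤ epsEntropy μ g ε := by
  refine le_csInf ⟨_, univ, .univ, by simpa [ENNReal.ofReal_lt_one] using hε.1, rfl⟩ ?_
  rintro _ ⟨A, hA, hμA, rfl⟩
  change _ ≤ shannonEntropy μ[|A] g
  have hμAc : μ.real Aᶜ ≤ ε := by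
    rw [probReal_compl_eq_one_sub hA]
    have := (ENNReal.ofReal_lt_iff_lt_toReal (by linarith [hε.2]) (measure_ne_top μ A)).1 hμA
    rw [measureReal_def]; linarith
  have key := shannonEntropy_le_binEntropy_add μ hg hA (pos_of_gt hμA).ne'
  have hlog : 0 ≤ log (Fintype.card G) := log_natCast_nonneg _
  linarith [binEntropy_le_log_two (p := μ.real A), mul_le_mul_of_nonneg_right hμAc hlog]

end EpsEntropy

lemma log_card_fin_fun (F : Type*) [Fintype F] (n : ℕ) :
    log (Fintype.card (Fin n → F)) = n * log (Fintype.card F) := by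
  simp [log_pow]

section JointMap

variable {X : Type*} [MeasurableSpace X] (μ : Measure X) {T : X → X} {F : Type*} {f : X → F}

lemma measurable_jointMap [MeasurableSpace F] (hT : Measurable T) (hf : Measurable f) (n : ℕ) :
    Measurable (jointMap T f n) :=
  measurable_pi_lambda _ fun i => hf.comp (hT.iterate i)

lemma measurableSet_jointMap_preimage_singleton [MeasurableSpace F] [MeasurableSingletonClass F]
    (hT : Measurable T) (hf : Measurable f) (n : ℕ) (a : Fin n → F) :
    MeasurableSet (jointMap T f n ⁻¹' {a}) :=
  measurable_jointMap hT hf n (measurableSet_singleton a)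

variable [IsProbabilityMeasure μ] [Fintype F]

lemma mul_procEntropy_le_shannonEntropy_jointMap (T : X → X) (f : X → F) {n : ℕ} (hn : 1 ≤ n) :
    n * procEntropy μ T f ≤ shannonEntropy μ (jointMap T f n) := by
  have hle : procEntropy μ T f ≤ jointH μ T f n / n := by
    refine csInf_le ⟨0, ?_⟩ ⟨n, hn, rfl⟩
    rintro _ ⟨m, -, rfl⟩
    exact div_nonneg (shannonEntropy_nonneg μ _) m.cast_nonneg
  rwa [le_div_iff₀' (by positivity)] at hle

variable [MeasurableSpace F] [MeasurableSingletonClass F]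

lemma epsEntropy_jointMap_div_le (hT : Measurable T) (hf : Measurable f) {ε : ℝ} (hε : 0 < ε)
    (n : ℕ) : epsEntropy μ (jointMap T f n) ε / n ≤ log (Fintype.card F) := by
  rcases n.eq_zero_or_pos with rfl | hn
  · simpa using log_natCast_nonneg _
  rw [div_le_iff₀' (by positivity), ← log_card_fin_fun]
  exact (epsEntropy_le_shannonEntropy μ _ hε).trans
    (shannonEntropy_le_log_card μ (measurableSet_jointMap_preimage_singleton hT hf n))

lemma procEntropy_sub_le_epsEntropy_jointMap_div (hT : Measurable T) (hf : Measurable f) {ε : ℝ}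
    (hε : ε ∈ Ioo 0 1) {n : ℕ} (hn : 1 ≤ n) :
    procEntropy μ T f - ε * log (Fintype.card F) - log 2 / n ≤
      epsEntropy μ (jointMap T f n) ε / n := by
  have hn' : (0 : ℝ) < n := by positivity
  have hlow := shannonEntropy_sub_le_epsEntropy μ
    (measurableSet_jointMap_preimage_singleton hT hf n) hε
  have hjoint := mul_procEntropy_le_shannonEntropy_jointMap μ T f hn
  rw [log_card_fin_fun] at hlow
  rw [le_div_iff₀ hn', sub_mul, sub_mul, div_mul_cancel₀ _ hn'.ne']
  linarith

end JointMap

section Scaling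

variable {X : Type*} [MeasurableSpace X] (μ : Measure X) [IsProbabilityMeasure μ] {T : X → X}
  {F : Type*} [Fintype F] [MeasurableSpace F] [MeasurableSingletonClass F] {f : X → F}

lemma iSup_limsup_epsEntropy_jointMap_div_lt_top (hT : Measurable T) (hf : Measurable f) :
    (⨆ ε ∈ Ioo (0 : ℝ) 1,
      limsup (fun n : ℕ => ENNReal.ofReal (epsEntropy μ (jointMap T f n) ε / n)) atTop) < ⊤ := by
  refine lt_of_le_of_lt (iSup₂_le fun ε hε => ?_)
    (ENNReal.ofReal_lt_top (r := log (Fintype.card F)))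
  exact limsup_le_of_le (by isBoundedDefault) (.of_forall fun n =>
    ENNReal.ofReal_le_ofReal (epsEntropy_jointMap_div_le μ hT hf hε.1 n))

lemma ofReal_procEntropy_sub_le_liminf (hT : Measurable T) (hf : Measurable f) {ε : ℝ}
    (hε : ε ∈ Ioo 0 1) :
    ENNReal.ofReal (procEntropy μ T f - ε * log (Fintype.card F)) ≤
      liminf (fun n : ℕ => ENNReal.ofReal (epsEntropy μ (jointMap T f n) ε / n)) atTop := by
  have hlim : Tendsto (fun n : ℕ => ENNReal.ofReal
      (procEntropy μ T f - ε * log (Fintype.card F) - log 2 / n)) atTop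
      (𝓝 (ENNReal.ofReal (procEntropy μ T f - ε * log (Fintype.card F)))) := by
    simpa using ENNReal.tendsto_ofReal
      (tendsto_const_nhds.sub (tendsto_const_div_atTop_nhds_zero_nat (log 2)))
  rw [← hlim.liminf_eq]
  exact liminf_le_liminf (eventually_ge_atTop 1 |>.mono fun n hn =>
    ENNReal.ofReal_le_ofReal (procEntropy_sub_le_epsEntropy_jointMap_div μ hT hf hε hn))

lemma zero_lt_iSup_liminf_epsEntropy_jointMap_div (hT : Measurable T) (hf : Measurable f)
    (hpos : 0 < procEntropy μ T f) :
    0 < ⨆ ε ∈ Ioo (0 : ℝ) 1,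
      liminf (fun n : ℕ => ENNReal.ofReal (epsEntropy μ (jointMap T f n) ε / n)) atTop := by
  obtain ⟨c, hc, hcL⟩ := exists_pos_mul_lt hpos (log (Fintype.card F))
  have hε : min c 2⁻¹ ∈ Ioo (0 : ℝ) 1 := ⟨lt_min hc (by norm_num), by norm_num⟩
  have hεL : min c 2⁻¹ * log (Fintype.card F) < procEntropy μ T f := by
    nlinarith [min_le_left c 2⁻¹, log_natCast_nonneg (Fintype.card F)]
  refine lt_of_lt_of_le ?_ (le_iSup₂_of_le _ hε (ofReal_procEntropy_sub_le_liminf μ hT hf hε))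
  exact ENNReal.ofReal_pos.2 (sub_pos.2 hεL)

end Scaling

lemma exists_procEntropy_pos_of_kolEntropy_pos {X : Type*} [MeasurableSpace X] {μ : Measure X}
    {T : X → X} (h : 0 < kolEntropy μ T) :
    ∃ (k : ℕ) (f : X → Fin k), Measurable f ∧ 0 < procEntropy μ T f := by
  simpa only [kolEntropy, lt_iSup_iff, ENNReal.ofReal_pos, exists_prop] using h

theorem linear_scaling_of_positive_kolEntropy_general {X : Type*} [MeasurableSpace X]
    (μ : Measure X) [IsProbabilityMeasure μ]
    (e : X ≃ᵐ X)
    (h0 : 0 < kolEntropy μ (⇑e)) :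
    IsScalingSeq μ (⇑e) (fun n : ℕ => (n : ℝ)) := by
  obtain ⟨k, f, hf, hpos⟩ := exists_procEntropy_pos_of_kolEntropy_pos h0
  exact ⟨fun n hn => Nat.cast_pos.2 hn,
    fun k f hf => iSup_limsup_epsEntropy_jointMap_div_lt_top μ e.measurable hf,
    k, f, hf, zero_lt_iSup_liminf_epsEntropy_jointMap_div μ e.measurable hf hpos⟩

/-- Theorem 2, linear scaling corresponds to Kolmogorov entropy:
if `T` is an invertible ergodic measure-preserving transformation of a nonatomic
standard Borel probability space with `0 < h(T) < ∞`, then `c_n = n` is a scaling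
sequence for `T`. -/
theorem linear_scaling_of_positive_kolEntropy {X : Type*} [MeasurableSpace X]
    [StandardBorelSpace X] (μ : Measure X) [IsProbabilityMeasure μ] [NullSingletonClass μ]
    (e : X ≃ᵐ X) (herg : Ergodic (⇑e) μ)
    (h0 : 0 < kolEntropy μ (⇑e)) (h1 : kolEntropy μ (⇑e) < ⊤) :
    IsScalingSeq μ (⇑e) (fun n : ℕ => (n : ℝ)) :=
  linear_scaling_of_positive_kolEntropy_general μ e h0
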